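/- Let φ : [0,∞) → ℝ be differentiable and define W : SL(2) → ℝ by W(F) = φ(λmax(F) − 1/λmax(F)), where λmax(F) is the largest singular value of F. Then W is rank-one convex if and only if φ is nondecreasing and convex on [0,∞). -/

import Mathlib

open Matrix

/-- The largest singular value of a real 2×2 matrix `F`, i.e. the square root of
the largest eigenvalue of `FᵀF`. -/
noncomputable def lambdaMax (F : Matrix (Fin 2) (Fin 2) ℝ) : ℝ :=
  Real.sqrt (((Fᵀ * F).trace + Real.sqrt ((Fᵀ * F).trace ^ 2 - 4 * (Fᵀ * F).det)) / 2)

/-- Rank-one convexity on `SL(2)`: for every `F` with `det F = 1` and all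
`ξ, η ∈ ℝ²` with `⟨F⁻ᵀ, ξηᵀ⟩ = 0`, the map `t ↦ W(F + t·ξηᵀ)` is convex. -/
def RankOneConvexSL (W : Matrix (Fin 2) (Fin 2) ℝ → ℝ) : Prop :=
  ∀ F : Matrix (Fin 2) (Fin 2) ℝ, F.det = 1 →
    ∀ ξ η : Fin 2 → ℝ, ((vecMulVec ξ η)ᵀ * F⁻¹ᵀ).trace = 0 →
      ConvexOn ℝ Set.univ (fun t : ℝ => W (F + t • vecMulVec ξ η))

/-! On `SL(2)` one has `tr(FᵀF) - 2 = (F₀₀ - F₁₁)² + (F₀₁ + F₁₀)²`, so `λmax - 1/λmax` is the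
Euclidean norm of a linear function of `F`, and by the matrix determinant lemma the admissible
rank-one lines stay in `SL(2)`. Along such a line `W` is thus `φ` of the norm of an affine
function of `t`, which is convex as soon as `φ` is nondecreasing and convex on `[0,∞)`.
Conversely, along the simple shear `1 + t e₁e₂ᵀ` the energy is `φ |t|`, and convexity of this
even function forces `φ` to be nondecreasing and convex on `[0,∞)`. -/

theorem Matrix.det_add_smul_vecMulVec_of_trace_eq_zero {n K : Type*} [Fintype n] [DecidableEq n]
    [CommRing K] {F : Matrix n n K} (hF : IsUnit F.det) {ξ η : n → K}
    (h : ((vecMulVec ξ η)ᵀ * F⁻¹ᵀ).trace = 0) (t : K) :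
    (F + t • vecMulVec ξ η).det = F.det := by
  have hdot : η ⬝ᵥ (F⁻¹ *ᵥ ξ) = 0 := by
    rwa [← transpose_mul, trace_transpose, mul_vecMulVec, trace_vecMulVec, dotProduct_comm] at h
  rw [← smul_vecMulVec, vecMulVec_eq Unit, det_add_replicateCol_mul_replicateRow hF,
    det_unique (_ : Matrix Unit Unit K), Matrix.mul_assoc, ← replicateCol_mulVec]
  simp [mulVec_smul, hdot]

theorem ConvexOn.comp_of_mapsTo {𝕜 E α β : Type*} [Semiring 𝕜] [PartialOrder 𝕜]
    [AddCommMonoid E] [SMul 𝕜 E] [AddCommMonoid α] [PartialOrder α] [SMul 𝕜 α]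
    [AddCommMonoid β] [PartialOrder β] [SMul 𝕜 β] {s : Set E} {t : Set β} {f : E → β}
    {g : β → α} (hg : ConvexOn 𝕜 t g) (hf : ConvexOn 𝕜 s f) (hg' : MonotoneOn g t)
    (hst : Set.MapsTo f s t) : ConvexOn 𝕜 s (g ∘ f) :=
  ⟨hf.1, fun _ hx _ hy _ _ ha hb hab =>
    (hg' (hst (hf.1 hx hy ha hb hab)) (hg.1 (hst hx) (hst hy) ha hb hab)
      (hf.2 hx hy ha hb hab)).trans (hg.2 (hst hx) (hst hy) ha hb hab)⟩

theorem convexOn_norm_add_smul {E : Type*} [SeminormedAddCommGroup E] [NormedSpace ℝ E]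
    (u v : E) : ConvexOn ℝ Set.univ fun t : ℝ => ‖u + t • v‖ := by
  refine ((convexOn_norm convex_univ).comp_affineMap (AffineMap.lineMap u (u + v))).congr
    fun t _ => ?_
  simp [AffineMap.lineMap_apply_module', add_comm]

theorem Real.sqrt_half_add_sqrt_sq_sub_four_sub_inv {T : ℝ} (hT : 2 ≤ T) :
    √((T + √(T ^ 2 - 4)) / 2) - 1 / √((T + √(T ^ 2 - 4)) / 2) = √(T - 2) := by
  set D := √(T ^ 2 - 4)
  have hD0 : 0 ≤ D := Real.sqrt_nonneg _
  have hD : D ^ 2 = T ^ 2 - 4 := Real.sq_sqrt (by nlinarith)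
  set L := √((T + D) / 2)
  have hL : L ^ 2 = (T + D) / 2 := Real.sq_sqrt (by linarith)
  have hL1 : 1 ≤ L := Real.one_le_sqrt.mpr (by linarith)
  have hsq : (L - 1 / L) ^ 2 = T - 2 := by
    field_simp
    nlinarith
  have hnonneg : 0 ≤ L - 1 / L := by linarith [div_le_self zero_le_one hL1]
  rw [← hsq, Real.sqrt_sq hnonneg]

/-- The coordinates of the anticonformal part of `F` (the coefficient of `z̄` when `F` acts on
`ℂ ≅ ℝ²`), up to a factor `2`. -/
def anticonformalPart : Matrix (Fin 2) (Fin 2) ℝ →ₗ[ℝ] EuclideanSpace ℝ (Fin 2) where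
  toFun F := !₂[F 0 0 - F 1 1, F 0 1 + F 1 0]
  map_add' F G := by ext i; fin_cases i <;> simp <;> ring
  map_smul' c F := by ext i; fin_cases i <;> simp <;> ring

theorem trace_transpose_mul_self_sub_two_mul_det (F : Matrix (Fin 2) (Fin 2) ℝ) :
    (Fᵀ * F).trace - 2 * F.det = ‖anticonformalPart F‖ ^ 2 := by
  rw [EuclideanSpace.real_norm_sq_eq, det_fin_two]
  simp [anticonformalPart, trace, mul_apply, Fin.sum_univ_two]
  ring

theorem lambdaMax_sub_inv_eq_norm_anticonformalPart {F : Matrix (Fin 2) (Fin 2) ℝ}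
    (hF : F.det = 1) : lambdaMax F - 1 / lambdaMax F = ‖anticonformalPart F‖ := by
  have htr := trace_transpose_mul_self_sub_two_mul_det F
  rw [hF, mul_one] at htr
  have hdet : (Fᵀ * F).det = 1 := by rw [det_mul, det_transpose, hF, mul_one]
  rw [lambdaMax, hdet, mul_one,
    Real.sqrt_half_add_sqrt_sq_sub_four_sub_inv (by nlinarith [norm_nonneg (anticonformalPart F)]),
    htr, Real.sqrt_sq (norm_nonneg _)]

theorem monotoneOn_Ici_of_convexOn_comp_abs {φ : ℝ → ℝ}
    (h : ConvexOn ℝ Set.univ fun t => φ |t|) : MonotoneOn φ (Set.Ici 0) := by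
  rintro x (hx : 0 ≤ x) y (hy : 0 ≤ y) hxy
  have hseg : x ∈ segment ℝ (-y) y := by
    rw [segment_eq_Icc (by linarith)]
    exact ⟨by linarith, hxy⟩
  simpa [abs_of_nonneg hx, abs_of_nonneg hy] using
    h.le_on_segment (Set.mem_univ _) (Set.mem_univ _) hseg

theorem convexOn_Ici_of_convexOn_comp_abs {φ : ℝ → ℝ}
    (h : ConvexOn ℝ Set.univ fun t => φ |t|) : ConvexOn ℝ (Set.Ici 0) φ :=
  (h.subset (Set.subset_univ _) (convex_Ici 0)).congr fun x hx => by
    simp only [abs_of_nonneg (Set.mem_Ici.mp hx)]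

theorem rankOneConvex_iff_phi_monotone_convex_general
    (φ : ℝ → ℝ)
    (W : Matrix (Fin 2) (Fin 2) ℝ → ℝ)
    (hW : ∀ F : Matrix (Fin 2) (Fin 2) ℝ, F.det = 1 →
      W F = φ (lambdaMax F - 1 / lambdaMax F)) :
    RankOneConvexSL W ↔ MonotoneOn φ (Set.Ici 0) ∧ ConvexOn ℝ (Set.Ici 0) φ := by
  have hline : ∀ F : Matrix (Fin 2) (Fin 2) ℝ, F.det = 1 → ∀ ξ η : Fin 2 → ℝ,
      ((vecMulVec ξ η)ᵀ * F⁻¹ᵀ).trace = 0 → ∀ t : ℝ, W (F + t • vecMulVec ξ η) =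
        φ ‖anticonformalPart F + t • anticonformalPart (vecMulVec ξ η)‖ := by
    intro F hF ξ η h t
    have hdet := (det_add_smul_vecMulVec_of_trace_eq_zero (hF ▸ isUnit_one) h t).trans hF
    rw [hW _ hdet, lambdaMax_sub_inv_eq_norm_anticonformalPart hdet, map_add, map_smul]
  constructor
  · intro h
    have hperp :
        ((vecMulVec ![1, 0] ![0, 1])ᵀ * (1 : Matrix (Fin 2) (Fin 2) ℝ)⁻¹ᵀ).trace = 0 := by
      simp [trace, Fin.sum_univ_two]
    have hshear : ConvexOn ℝ Set.univ fun t => φ |t| :=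
      (h 1 det_one _ _ hperp).congr fun t _ => by
        simp only [hline 1 det_one _ _ hperp]
        simp [anticonformalPart, EuclideanSpace.norm_eq, Real.sqrt_sq_eq_abs]
    exact ⟨monotoneOn_Ici_of_convexOn_comp_abs hshear, convexOn_Ici_of_convexOn_comp_abs hshear⟩
  · rintro ⟨hmono, hconv⟩ F hF ξ η h
    exact (hconv.comp_of_mapsTo (convexOn_norm_add_smul _ _) hmono fun _ _ => norm_nonneg _).congr
      fun t _ => (hline F hF ξ η h t).symm

/-- **Dunn–Fosdick–Zhang-type criterion.** For `φ : [0,∞) → ℝ`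
differentiable and `W(F) = φ(λmax(F) − 1/λmax(F))` on `SL(2)`, the energy `W`
is rank-one convex iff `φ` is nondecreasing and convex on `[0,∞)`. -/
theorem rankOneConvex_iff_phi_monotone_convex
    (φ : ℝ → ℝ) (hφdiff : DifferentiableOn ℝ φ (Set.Ici 0))
    (W : Matrix (Fin 2) (Fin 2) ℝ → ℝ)
    (hW : ∀ F : Matrix (Fin 2) (Fin 2) ℝ, F.det = 1 →
      W F = φ (lambdaMax F - 1 / lambdaMax F)) :
    RankOneConvexSL W ↔ MonotoneOn φ (Set.Ici 0) ∧ ConvexOn ℝ (Set.Ici 0) φ :=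
  rankOneConvex_iff_phi_monotone_convex_general φ W hW
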